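/- arXiv:2407.00962 — 7 statements merged into one kernel-verified Lean document; each statement's English description precedes it below -/
import Mathlib

section
/- (Euler's trace formula) Let K be a field and f ∈ K[X] a monic separable polynomial of degree n with splitting field L, so that B = K[x]/(f) embeds into a product of copies of L via the roots of f. Then for 0 ≤ k ≤ n-1, the trace from B to K of x^k / f'(x) equals 0 if k < n-1 and equals 1 if k = n-1. -/
open Polynomial

/-! Over the splitting field `L` of `f`, the polynomial `f` becomes `∏ (X - α)` over its `n`
distinct roots, so evaluation at the roots identifies `L[X]/(f)` with `L^n` and the trace of the
class of `w` is `∑ w(α)`. The trace commutes with the base change `K[X]/(f) → L[X]/(f)`, hence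
`Tr(x^k / f'(x)) = ∑ α^k / f'(α)`. Since `f'(α) = ∏_{β ≠ α} (α - β)`, Lagrange interpolation of
`X^k` at the roots identifies this sum with the coefficient of `X^(n-1)` in `X^k`. -/

theorem Algebra.trace_pi_apply {R ι : Type*} [CommRing R] [Fintype ι] [DecidableEq ι]
    (x : ι → R) : Algebra.trace R (ι → R) x = ∑ i, x i := by
  simp [Algebra.trace_eq_matrix_trace (Pi.basisFun R ι), Matrix.trace,
    Algebra.leftMulMatrix_eq_repr_mul]

theorem Algebra.trace_map_of_basis {R S A B ι : Type*} [CommRing R] [CommRing S] [CommRing A]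
    [CommRing B] [Algebra R A] [Algebra S B] [Fintype ι] [DecidableEq ι] (σ : R →+* S)
    (φ : A →+* B) (hφ : ∀ c, φ (algebraMap R A c) = algebraMap S B (σ c))
    (b : Module.Basis ι R A) (b' : Module.Basis ι S B) (hb : ∀ i, φ (b i) = b' i) (z : A) :
    Algebra.trace S B (φ z) = σ (Algebra.trace R A z) := by
  have hrepr : ∀ y i, b'.repr (φ y) i = σ (b.repr y i) := by
    intro y i
    conv_lhs => rw [← b.sum_repr y, map_sum]
    simp only [Algebra.smul_def, map_mul, hφ, hb]
    simp only [← Algebra.smul_def, b'.repr_sum_self]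
  rw [Algebra.trace_eq_matrix_trace b, Algebra.trace_eq_matrix_trace b', Matrix.trace,
    Matrix.trace, map_sum]
  simp only [Matrix.diag_apply, Algebra.leftMulMatrix_eq_repr_mul, ← hb, ← map_mul, hrepr]

namespace AdjoinRoot

theorem map_mk {R S : Type*} [CommRing R] [CommRing S] (σ : R →+* S) (f : R[X]) (q : S[X])
    (h : q ∣ f.map σ) (w : R[X]) : map σ f q h (mk f w) = mk q (w.map σ) := by
  rw [map, lift_mk, ← eval₂_map, ← aeval_eq, aeval_def]
  rfl

theorem trace_map {R S : Type*} [CommRing R] [CommRing S] [Nontrivial S] (σ : R →+* S)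
    {f : R[X]} {q : S[X]} (hf : f.Monic) (hq : f.map σ = q) (z : AdjoinRoot f) :
    Algebra.trace S (AdjoinRoot q) (map σ f q (dvd_of_eq hq.symm) z) =
      σ (Algebra.trace R (AdjoinRoot f) z) := by
  classical
  have hdeg : q.natDegree = f.natDegree := hq ▸ hf.natDegree_map σ
  refine Algebra.trace_map_of_basis σ _ (fun c => map_of ..) (powerBasis' hf).basis
    ((powerBasis' (hq ▸ hf.map σ)).basis.reindex (finCongr hdeg)) (fun i => ?_) z
  simp only [PowerBasis.coe_basis, powerBasis'_gen, map_pow, map_root,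
    Module.Basis.coe_reindex, Function.comp_apply]
  rfl

end AdjoinRoot

theorem Polynomial.Splits.eq_nodal_roots_toFinset {R : Type*} [CommRing R] [IsDomain R]
    [DecidableEq R] {p : R[X]} (hp : p.Splits) (hm : p.Monic) (hnd : p.roots.Nodup) :
    p = Lagrange.nodal p.roots.toFinset id := by
  rw [Lagrange.nodal_eq, Finset.prod_eq_multiset_prod, Multiset.toFinset_val,
    Multiset.dedup_eq_self.mpr hnd]
  exact hp.eq_prod_roots_of_monic hm

namespace Lagrange

variable {F ι : Type*} [Field F] {s : Finset ι} {v : ι → F}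

theorem sum_pow_div_eval_derivative_nodal [DecidableEq ι] (hvs : Set.InjOn v s) {k : ℕ}
    (hk : k < s.card) :
    ∑ i ∈ s, v i ^ k / (derivative (nodal s v)).eval (v i) =
      if k = s.card - 1 then 1 else 0 := by
  calc ∑ i ∈ s, v i ^ k / (derivative (nodal s v)).eval (v i)
      = ∑ i ∈ s, (X ^ k : F[X]).eval (v i) / ∏ j ∈ s.erase i, (v i - v j) :=
        Finset.sum_congr rfl fun i hi => by
          rw [eval_nodal_derivative_eval_node_eq hi, eval_nodal, eval_X_pow]
    _ = (X ^ k : F[X]).coeff (s.card - 1) :=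
        (coeff_eq_sum hvs (by rw [degree_X_pow]; exact_mod_cast hk)).symm
    _ = if k = s.card - 1 then 1 else 0 := by
        rw [coeff_X_pow]
        exact if_congr eq_comm rfl rfl

theorem eval₂_nodal_at_nodes :
    eval₂ (Algebra.ofId F (s → F) : F →+* s → F) (fun i : s => v i) (nodal s v) = 0 := by
  ext i
  simp [Algebra.toRingHom_ofId, ← aeval_def, eval_nodal_at_node i.2]

noncomputable def adjoinRootNodalEval (s : Finset ι) (v : ι → F) :
    AdjoinRoot (nodal s v) →ₐ[F] (s → F) :=
  AdjoinRoot.liftAlgHom _ (Algebra.ofId F _) (fun i : s => v i) eval₂_nodal_at_nodes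

@[simp]
theorem adjoinRootNodalEval_mk (w : F[X]) :
    adjoinRootNodalEval s v (AdjoinRoot.mk _ w) = fun i : s => w.eval (v i) := by
  ext i
  simp [adjoinRootNodalEval, Algebra.toRingHom_ofId, ← aeval_def]

theorem finrank_adjoinRoot_nodal : Module.finrank F (AdjoinRoot (nodal s v)) = s.card := by
  rw [(AdjoinRoot.powerBasis nodal_ne_zero).finrank, AdjoinRoot.powerBasis_dim, natDegree_nodal]

theorem adjoinRootNodalEval_surjective (hvs : Set.InjOn v s) :
    Function.Surjective (adjoinRootNodalEval s v) := by
  intro r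
  obtain ⟨q, hq⟩ := (exists_eval_eq_iff (fun i : s => v i) r).mpr
    fun i j hij => by rw [Subtype.ext (hvs i.2 j.2 hij)]
  exact ⟨AdjoinRoot.mk _ q, by rw [adjoinRootNodalEval_mk]; exact funext hq⟩

theorem adjoinRootNodalEval_bijective (hvs : Set.InjOn v s) :
    Function.Bijective (adjoinRootNodalEval s v) := by
  have : Module.Finite F (AdjoinRoot (nodal s v)) := (AdjoinRoot.powerBasis nodal_ne_zero).finite
  have hsurj := adjoinRootNodalEval_surjective hvs
  have hdim : Module.finrank F (AdjoinRoot (nodal s v)) = Module.finrank F (s → F) := by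
    simp [finrank_adjoinRoot_nodal]
  exact ⟨(LinearMap.injective_iff_surjective_of_finrank_eq_finrank
    (f := (adjoinRootNodalEval s v).toLinearMap) hdim).mpr hsurj, hsurj⟩

theorem trace_adjoinRoot_nodal_mk (hvs : Set.InjOn v s) (w : F[X]) :
    Algebra.trace F (AdjoinRoot (nodal s v)) (AdjoinRoot.mk _ w) = ∑ i ∈ s, w.eval (v i) := by
  classical
  rw [← Algebra.trace_eq_of_algEquiv (AlgEquiv.ofBijective _ (adjoinRootNodalEval_bijective hvs)),
    AlgEquiv.coe_ofBijective, adjoinRootNodalEval_mk, Algebra.trace_pi_apply,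
    Finset.sum_coe_sort s fun i => w.eval (v i)]

end Lagrange

theorem euler_trace_formula_general {K : Type*} [Field K] {n : ℕ} (f : K[X])
    (hmonic : f.Monic) (hsep : f.Separable) (hdeg : f.natDegree = n)
    (g : AdjoinRoot f) (hg : g * AdjoinRoot.mk f (derivative f) = 1) :
    ∀ k : ℕ, k < n →
      Algebra.trace K (AdjoinRoot f) (AdjoinRoot.root f ^ k * g) =
        if k = n - 1 then 1 else 0 := by
  classical
  intro k hk
  obtain ⟨w, rfl⟩ := AdjoinRoot.mk_surjective g
  set σ := algebraMap K f.SplittingField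
  set s := (f.map σ).roots.toFinset
  have hnodal : f.map σ = Lagrange.nodal s id :=
    (SplittingField.splits f).eq_nodal_roots_toFinset (hmonic.map σ) (nodup_roots hsep.map)
  have hcard : s.card = n := by
    rw [← Lagrange.natDegree_nodal (v := id), ← hnodal, natDegree_map, hdeg]
  have hw : ∀ α ∈ s, eval α (w.map σ) = (eval α (derivative (Lagrange.nodal s id)))⁻¹ := by
    intro α hα
    rw [← map_mul, ← map_one (AdjoinRoot.mk f)] at hg
    have h := congrFun (congrArg (Lagrange.adjoinRootNodalEval s id ∘
      AdjoinRoot.map σ f _ (dvd_of_eq hnodal.symm)) hg) ⟨α, hα⟩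
    simp only [Function.comp_apply, AdjoinRoot.map_mk, Lagrange.adjoinRootNodalEval_mk,
      Polynomial.map_mul, Polynomial.map_one, eval_mul, eval_one, ← derivative_map, hnodal,
      id] at h
    exact eq_inv_of_mul_eq_one_left h
  apply σ.injective
  rw [← AdjoinRoot.trace_map σ hmonic hnodal, ← AdjoinRoot.mk_X, ← map_pow, ← map_mul,
    AdjoinRoot.map_mk, Lagrange.trace_adjoinRoot_nodal_mk (Set.injOn_id _)]
  calc ∑ α ∈ s, eval (id α) ((X ^ k * w).map σ)
      = ∑ α ∈ s, id α ^ k / eval (id α) (derivative (Lagrange.nodal s id)) :=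
        Finset.sum_congr rfl fun α hα => by
          rw [id, Polynomial.map_mul, eval_mul, hw α hα, Polynomial.map_pow, map_X, eval_pow,
            eval_X, div_eq_mul_inv]
    _ = if k = s.card - 1 then 1 else 0 :=
        Lagrange.sum_pow_div_eval_derivative_nodal (Set.injOn_id _) (hcard ▸ hk)
    _ = σ (if k = n - 1 then 1 else 0) := by rw [hcard]; split_ifs <;> simp

/-- Euler's trace formula: for a monic separable polynomial `f` of degree `n` over a
field `K` and `B = K[x]/(f)`, in which the derivative `f'` is invertible (with inverse
`g`), the trace from `B` to `K` of `x^k / f'(x)` is `0` for `k < n - 1` and `1` for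
`k = n - 1`. -/
theorem euler_trace_formula {K : Type*} [Field K] {n : ℕ} (hn : 1 ≤ n) (f : K[X])
    (hmonic : f.Monic) (hsep : f.Separable) (hdeg : f.natDegree = n)
    (g : AdjoinRoot f) (hg : g * AdjoinRoot.mk f (derivative f) = 1) :
    ∀ k : ℕ, k < n →
      Algebra.trace K (AdjoinRoot f) (AdjoinRoot.root f ^ k * g) =
        if k = n - 1 then 1 else 0 :=
  euler_trace_formula_general f hmonic hsep hdeg g hg
end

section
/- The bilinear form β* on B = A[x]/(f) defined by β*(b_1, b_2) = (the coefficient of x^{n-1} in the product b_1 b_2, written in the basis 1, x, ..., x^{n-1}) is a symmetric, nondegenerate (perfect) A-bilinear pairing on B. -/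
/-!
Write `x` for the root of `f`. Pairing the reversed basis `x^{n-1}, …, x, 1` against
`1, x, …, x^{n-1}` under `(b₁, b₂) ↦ coord_{n-1}(b₁ b₂)` gives the Gram matrix whose `(i, j)`
entry is the `x^{n-1}`-coordinate of `x^{n-1-j+i}`. For `i ≤ j` that power is itself a basis
vector, so the matrix is lower unitriangular, its determinant is `1`, and the induced map
`B → Hom_A(B, A)` is an isomorphism. Symmetry is commutativity of `B`.
-/

namespace Module.Basis

variable {A B : Type*} [CommRing A] [Ring B] [Algebra A B] {n : ℕ}

noncomputable def coordMulForm (b : Basis (Fin n) A B) (k : Fin n) : B →ₗ[A] B →ₗ[A] A :=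
  (LinearMap.mul A B).compr₂ (b.coord k)

theorem coordMulForm_apply (b : Basis (Fin n) A B) (k : Fin n) (b₁ b₂ : B) :
    b.coordMulForm k b₁ b₂ = b.coord k (b₁ * b₂) :=
  rfl

variable (b : Basis (Fin n) A B) {x : B} (hb : ∀ i : Fin n, b i = x ^ (i : ℕ))
include hb

theorem coord_pow_of_lt (k : Fin n) {m : ℕ} (hm : m < n) :
    b.coord k (x ^ m) = if m = k then 1 else 0 := by
  rw [show x ^ m = b ⟨m, hm⟩ from (hb ⟨m, hm⟩).symm, coord_apply, repr_self, Finsupp.single_apply]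
  simp only [Fin.ext_iff, eq_comm]

theorem toMatrix_coordMulForm_reindex_rev_apply (k : Fin n) (i j : Fin n) :
    LinearMap.toMatrix (b.reindex Fin.revPerm) b.dualBasis (b.coordMulForm k) i j =
      b.coord k (x ^ (n - (j + 1) + i)) := by
  rw [LinearMap.toMatrix_apply, dualBasis_repr, coordMulForm_apply, reindex_apply,
    Fin.revPerm_symm, Fin.revPerm_apply, hb, hb, Fin.val_rev, pow_add]

theorem det_toMatrix_coordMulForm_reindex_rev {k : Fin n} (hk : (k : ℕ) = n - 1) :
    (LinearMap.toMatrix (b.reindex Fin.revPerm) b.dualBasis (b.coordMulForm k)).det = 1 := by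
  rw [Matrix.det_of_isLowerTriangular, Finset.prod_eq_one]
  · intro i _
    rw [toMatrix_coordMulForm_reindex_rev_apply b hb, coord_pow_of_lt b hb k (by omega),
      if_pos (by omega)]
  · rintro i j (hij : i < j)
    rw [toMatrix_coordMulForm_reindex_rev_apply b hb, coord_pow_of_lt b hb k (by omega),
      if_neg (by omega)]

theorem bijective_coordMulForm {k : Fin n} (hk : (k : ℕ) = n - 1) :
    Function.Bijective (b.coordMulForm k) := by
  have hdet := b.det_toMatrix_coordMulForm_reindex_rev hb hk
  exact (LinearEquiv.ofIsUnitDet (hdet ▸ isUnit_one)).bijective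

end Module.Basis

open Polynomial

/-- The pairing `β*(b₁, b₂) = (coefficient of x^{n-1} in b₁b₂ w.r.t. the basis
`1, x, ..., x^{n-1}`)` on `B = A[x]/(f)` is a symmetric, nondegenerate (perfect)
`A`-bilinear pairing: the induced map `B → Hom_A(B, A)` is bijective. -/
theorem beta_pairing_symm_perfect {A : Type*} [CommRing A] {n : ℕ} (hn : 1 ≤ n)
    (f : A[X])
    (b : Module.Basis (Fin n) A (AdjoinRoot f))
    (hb : ∀ i : Fin n, b i = AdjoinRoot.root f ^ (i : ℕ)) :
    (∀ b₁ b₂ : AdjoinRoot f,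
        b.coord ⟨n - 1, by omega⟩ (b₁ * b₂) = b.coord ⟨n - 1, by omega⟩ (b₂ * b₁)) ∧
      Function.Bijective fun b₁ : AdjoinRoot f =>
        (b.coord ⟨n - 1, by omega⟩).comp (LinearMap.mulLeft A b₁) :=
  ⟨fun b₁ b₂ => by rw [mul_comm], b.bijective_coordMulForm hb rfl⟩
end

section
/- Let A be a commutative ring, f = x^{2n} + a_2 x^{2n-2} + ... + a_{2n} ∈ A[x] an even monic polynomial, B = A[x]/(f), τ the involution with τ(x) = -x, and β* the pairing β*(b_1,b_2) = coefficient of x^{2n-1} in b_1 b_2. Then the form ω(b_1, b_2) := β*(b_1, τ(b_2)) is alternating: ω(b_1, b_2) = -ω(b_2, b_1) for all b_1, b_2 ∈ B, and ω is a perfect pairing. -/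
/-!
Let `φ` be the coordinate of `x ^ (2n-1)` in the power basis. Since `τ x = -x` and `2n - 1` is odd,
`φ ∘ τ = -φ`; as `τ` is an involutive ring map, `τ (b₂ * τ b₁) = b₁ * τ b₂`, which gives the
alternation. For perfectness, the Gram matrix `φ (x ^ (i + j))` of `(s, t) ↦ φ (s * t)` vanishes above
the antidiagonal and is `1` on it, so its determinant is `±1`; precomposing with the automorphism `τ`
keeps the pairing perfect.
-/

open Polynomial

theorem Matrix.isUnit_det_of_isUpperTriangular_submatrix_rev {R : Type*} [CommRing R] {m : ℕ}
    {M : Matrix (Fin m) (Fin m) R} (htri : (M.submatrix Fin.revPerm id).IsUpperTriangular)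
    (hdiag : ∀ i, IsUnit (M i.rev i)) : IsUnit M.det := by
  have hrev : IsUnit (M.submatrix Fin.revPerm id).det := by
    rw [Matrix.det_of_isUpperTriangular htri]
    exact IsUnit.prod_univ_iff.mpr hdiag
  rw [Matrix.det_permute] at hrev
  exact (IsUnit.mul_iff.mp hrev).2

section PowerBasis

variable {R S : Type*} [CommRing R] [CommRing S] [Algebra R S] {m : ℕ} {x : S}
  {b : Module.Basis (Fin m) R S}

theorem Module.Basis.coord_pow_eq_ite (hb : ∀ i, b i = x ^ (i : ℕ)) (k : Fin m) {j : ℕ}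
    (hj : j < m) : b.coord k (x ^ j) = if j = k then 1 else 0 := by
  rw [show x ^ j = b ⟨j, hj⟩ from (hb ⟨j, hj⟩).symm, Module.Basis.coord_apply, b.repr_self,
    Finsupp.single_apply]
  exact if_congr (by rw [Fin.ext_iff, eq_comm]) rfl rfl

theorem Module.Basis.bijective_mul_compr₂_coord (hb : ∀ i, b i = x ^ (i : ℕ)) {k : Fin m}
    (hk : (k : ℕ) + 1 = m) : Function.Bijective ((LinearMap.mul R S).compr₂ (b.coord k)) := by
  set L := (LinearMap.mul R S).compr₂ (b.coord k)
  have hgram : ∀ i j : Fin m, (i : ℕ) + j < m →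
      LinearMap.toMatrix b b.dualBasis L i j = if (i : ℕ) + j = k then 1 else 0 := by
    intro i j hij
    rw [LinearMap.toMatrix_apply, Module.Basis.dualBasis_repr, LinearMap.compr₂_apply,
      LinearMap.mul_apply', hb, hb, ← pow_add, add_comm, b.coord_pow_eq_ite hb k hij]
  have hdet : IsUnit (LinearMap.toMatrix b b.dualBasis L).det := by
    apply Matrix.isUnit_det_of_isUpperTriangular_submatrix_rev
    · intro i j (hji : j < i)
      rw [Matrix.submatrix_apply, id, Fin.revPerm_apply, hgram _ _ (by grind),
        if_neg (by grind)]
    · intro i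
      rw [hgram _ _ (by grind), if_pos (by grind)]
      exact isUnit_one
  rw [← LinearEquiv.coe_ofIsUnitDet hdet]
  exact (LinearEquiv.ofIsUnitDet hdet).bijective

theorem Module.Basis.coord_comp_eq_neg_of_map_eq_neg (hb : ∀ i, b i = x ^ (i : ℕ)) {k : Fin m}
    (hk : Odd (k : ℕ)) {τ : S →ₐ[R] S} (hτ : τ x = -x) :
    (b.coord k).comp τ.toLinearMap = -b.coord k := by
  refine b.ext fun i => ?_
  have hτi : τ (b i) = (-1 : R) ^ (i : ℕ) • b i := by
    rw [hb, map_pow, hτ, neg_pow, ← algebraMap_smul S, map_pow, map_neg, map_one, smul_eq_mul]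
  rw [LinearMap.comp_apply, AlgHom.toLinearMap_apply, hτi, map_smul, LinearMap.neg_apply,
    Module.Basis.coord_apply, b.repr_self, Finsupp.single_apply, smul_eq_mul]
  split_ifs with hik
  · rw [hik, hk.neg_one_pow, mul_one]
  · rw [mul_zero, neg_zero]

end PowerBasis

theorem LinearMap.apply_mul_map_eq_neg {R S : Type*} [CommRing R] [CommRing S] [Algebra R S]
    {τ : S →ₐ[R] S} (hτ : Function.Involutive τ) {φ : S →ₗ[R] R}
    (hφ : φ.comp τ.toLinearMap = -φ) (s t : S) : φ (s * τ t) = -φ (t * τ s) := by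
  have hφτ := LinearMap.congr_fun hφ (t * τ s)
  rw [LinearMap.comp_apply, AlgHom.toLinearMap_apply, map_mul, hτ, mul_comm] at hφτ
  exact hφτ

theorem AdjoinRoot.involutive_of_map_root_eq_neg {A : Type*} [CommRing A] {f : A[X]}
    {τ : AdjoinRoot f →ₐ[A] AdjoinRoot f} (hτ : τ (AdjoinRoot.root f) = -AdjoinRoot.root f) :
    Function.Involutive τ := by
  have hτ2 : τ.comp τ = AlgHom.id A (AdjoinRoot f) :=
    AdjoinRoot.algHom_ext (by rw [AlgHom.comp_apply, hτ, map_neg, hτ, neg_neg, AlgHom.id_apply])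
  exact fun z => AlgHom.congr_fun hτ2 z

theorem omega_alternating_perfect {A : Type*} [CommRing A] {n : ℕ} (hn : 1 ≤ n)
    (f : A[X])
    (b : Module.Basis (Fin (2 * n)) A (AdjoinRoot f))
    (hb : ∀ i : Fin (2 * n), b i = AdjoinRoot.root f ^ (i : ℕ))
    (τ : AdjoinRoot f →ₐ[A] AdjoinRoot f)
    (hτ : τ (AdjoinRoot.root f) = -AdjoinRoot.root f) :
    (∀ b₁ b₂ : AdjoinRoot f,
        b.coord ⟨2 * n - 1, by omega⟩ (b₁ * τ b₂) =
          -b.coord ⟨2 * n - 1, by omega⟩ (b₂ * τ b₁)) ∧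
      Function.Bijective fun b₁ : AdjoinRoot f =>
        (b.coord ⟨2 * n - 1, by omega⟩).comp
          ((LinearMap.mulLeft A b₁).comp τ.toLinearMap) := by
  have hτinv := AdjoinRoot.involutive_of_map_root_eq_neg hτ
  have htop : Odd (2 * n - 1) := ⟨n - 1, by omega⟩
  refine ⟨LinearMap.apply_mul_map_eq_neg hτinv (b.coord_comp_eq_neg_of_map_eq_neg hb htop hτ), ?_⟩
  have hpair := b.bijective_mul_compr₂_coord hb (k := ⟨2 * n - 1, by omega⟩) (by rw [Fin.val_mk]; omega)
  exact (LinearEquiv.ofInvolutive τ.toLinearMap hτinv).dualMap.bijective.comp hpair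
end

section
/- Let A be a commutative ring, f_0 = x^{2n} + a_2 x^{2n-2} + ... + a_{2n} an even monic polynomial, f = x·f_0, and B = A[x]/(f), a free A-module of rank 2n+1 with involution τ(x) = -x. Let β*(b_1,b_2) be the coefficient of x^{2n} in b_1b_2. Then ω(b_1,b_2) := β*(b_1, τ(b_2)) is a symmetric perfect pairing on B for which multiplication by x is anti-self-adjoint: ω(x b_1, b_2) + ω(b_1, x b_2) = 0. -/
/-!
Let `ψ` be the coordinate of `x^{2n}`. Since `τ (x^i) = (-1)^i x^i` and `2n` is even, `ψ ∘ τ = ψ`;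
together with `τ ∘ τ = id` this makes `ω` symmetric, and `τ x = -x` makes `x` anti-self-adjoint.
The form `ω` is the pairing `(y, z) ↦ ψ (y z)` twisted by the automorphism `τ`, and that pairing is
perfect: its Gram matrix `ψ (x^{i+j})` vanishes above the antidiagonal `i + j = 2n`, on which it
is `1`, so its determinant is a unit.
-/

open Polynomial

theorem Matrix.isUnit_det_of_eq_zero_of_lt_rev {R : Type*} [CommRing R] {m : ℕ}
    (M : Matrix (Fin m) (Fin m) R) (hzero : ∀ i j, j < i.rev → M i j = 0)
    (hunit : ∀ i, IsUnit (M i i.rev)) : IsUnit M.det := by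
  have htri : (M.submatrix Fin.revPerm id).IsUpperTriangular := fun i j hji => by
    simpa using hzero i.rev j (by simpa using hji)
  have hdiag : IsUnit (M.submatrix Fin.revPerm id).det := by
    rw [Matrix.det_of_isUpperTriangular htri]
    exact IsUnit.prod_univ_iff.mpr fun i => by simpa using hunit i.rev
  rw [Matrix.det_permute] at hdiag
  exact isUnit_of_mul_isUnit_right hdiag

theorem LinearMap.bijective_of_isUnit_det_toMatrix {R M N ι : Type*} [CommRing R]
    [AddCommGroup M] [Module R M] [AddCommGroup N] [Module R N] [Fintype ι] [DecidableEq ι]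
    {v : Module.Basis ι R M} {w : Module.Basis ι R N} {f : M →ₗ[R] N}
    (h : IsUnit (LinearMap.toMatrix v w f).det) : Function.Bijective f := by
  simpa [← LinearEquiv.coe_coe, LinearEquiv.coe_ofIsUnitDet] using
    (LinearEquiv.ofIsUnitDet h).bijective

section PowerBasis

variable {A S : Type*} [CommRing A] [CommRing S] [Algebra A S] {m : ℕ}
  {b : Module.Basis (Fin (m + 1)) A S} {r : S}

theorem coord_last_pow (hb : ∀ i, b i = r ^ (i : ℕ)) {k : ℕ} (hk : k ≤ m) :
    b.coord (Fin.last m) (r ^ k) = if k = m then 1 else 0 := by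
  rw [← hb ⟨k, by omega⟩, Module.Basis.coord_apply, Module.Basis.repr_self,
    Finsupp.single_apply]
  simp [Fin.ext_iff, eq_comm]

theorem bijective_mul_compr₂_coord_last (hb : ∀ i, b i = r ^ (i : ℕ)) :
    Function.Bijective ((LinearMap.mul A S).compr₂ (b.coord (Fin.last m))) := by
  classical
  refine LinearMap.bijective_of_isUnit_det_toMatrix (v := b) (w := b.dualBasis) ?_
  have hentry : ∀ i j, LinearMap.toMatrix b b.dualBasis ((LinearMap.mul A S).compr₂
      (b.coord (Fin.last m))) i j = b.coord (Fin.last m) (r ^ ((j : ℕ) + i)) := by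
    intro i j
    simp [LinearMap.toMatrix_apply, hb, pow_add]
  refine Matrix.isUnit_det_of_eq_zero_of_lt_rev _ (fun i j hji => ?_) (fun i => ?_)
  · have : (j : ℕ) + i < m := by have := Fin.lt_def.mp hji; rw [Fin.val_rev] at this; omega
    rw [hentry, coord_last_pow hb this.le, if_neg this.ne]
  · have : ((i.rev : ℕ) + i) = m := by rw [Fin.val_rev]; omega
    rw [hentry, this, coord_last_pow hb le_rfl, if_pos rfl]
    exact isUnit_one

variable {τ : S →ₐ[A] S}

theorem AlgHom.map_pow_of_map_eq_neg (hτ : τ r = -r) (k : ℕ) :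
    τ (r ^ k) = (-1 : A) ^ k • r ^ k := by
  rw [map_pow, hτ, neg_pow, Algebra.smul_def]
  simp

theorem AlgHom.involutive_of_map_eq_neg (hb : ∀ i, b i = r ^ (i : ℕ)) (hτ : τ r = -r) :
    Function.Involutive τ := by
  have : (τ.toLinearMap).comp τ.toLinearMap = LinearMap.id :=
    b.ext fun i => by
      simp [hb, τ.map_pow_of_map_eq_neg hτ, smul_smul, ← pow_add, ← two_mul, pow_mul]
  exact fun y => LinearMap.congr_fun this y

theorem coord_last_map_of_even (hb : ∀ i, b i = r ^ (i : ℕ)) (hτ : τ r = -r) (hm : Even m)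
    (y : S) : b.coord (Fin.last m) (τ y) = b.coord (Fin.last m) y := by
  have : (b.coord (Fin.last m)).comp τ.toLinearMap = b.coord (Fin.last m) :=
    b.ext fun i => by
      rw [LinearMap.comp_apply, AlgHom.toLinearMap_apply, hb, τ.map_pow_of_map_eq_neg hτ,
        map_smul, coord_last_pow hb (Fin.is_le i)]
      split_ifs with h
      · rw [h, hm.neg_one_pow, one_smul]
      · rw [smul_zero]
  exact LinearMap.congr_fun this y

end PowerBasis

theorem odd_orthogonal_form {A : Type*} [CommRing A] {n : ℕ} (f : A[X])
    (b : Module.Basis (Fin (2 * n + 1)) A (AdjoinRoot f))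
    (hb : ∀ i : Fin (2 * n + 1), b i = AdjoinRoot.root f ^ (i : ℕ))
    (τ : AdjoinRoot f →ₐ[A] AdjoinRoot f)
    (hτ : τ (AdjoinRoot.root f) = -AdjoinRoot.root f) :
    (∀ b₁ b₂ : AdjoinRoot f,
        b.coord ⟨2 * n, by omega⟩ (b₁ * τ b₂) = b.coord ⟨2 * n, by omega⟩ (b₂ * τ b₁)) ∧
      (Function.Bijective fun b₁ : AdjoinRoot f =>
        (b.coord ⟨2 * n, by omega⟩).comp
          ((LinearMap.mulLeft A b₁).comp τ.toLinearMap)) ∧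
      (∀ b₁ b₂ : AdjoinRoot f,
        b.coord ⟨2 * n, by omega⟩ ((AdjoinRoot.root f * b₁) * τ b₂) +
          b.coord ⟨2 * n, by omega⟩ (b₁ * τ (AdjoinRoot.root f * b₂)) = 0) := by
  set ψ := b.coord (Fin.last (2 * n))
  have hτ_inv : Function.Involutive τ := τ.involutive_of_map_eq_neg hb hτ
  have hψτ : ∀ y, ψ (τ y) = ψ y := coord_last_map_of_even hb hτ (even_two_mul n)
  have hcomp_inv : Function.Involutive fun g : Module.Dual A (AdjoinRoot f) =>
      g.comp τ.toLinearMap := fun g => by ext y; simp [hτ_inv y]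
  refine ⟨fun b₁ b₂ => ?_, ?_, fun b₁ b₂ => ?_⟩
  · change ψ _ = ψ _
    rw [← hψτ, map_mul τ, hτ_inv, mul_comm]
  · exact hcomp_inv.bijective.comp (bijective_mul_compr₂_coord_last hb)
  · change ψ _ + ψ _ = 0
    rw [map_mul τ, hτ, show b₁ * (-AdjoinRoot.root f * τ b₂) = -(AdjoinRoot.root f * b₁ * τ b₂)
      by ring, map_neg, add_neg_cancel]
end

section
/- Let A be a commutative ring in which 2 is invertible, B = A[x]/(f) with f monic even of degree 2n, and τ(x) = -x the involution. Then the subalgebra A' = B^τ of τ-fixed elements equals the image of A[y]/(y^n + a_2 y^{n-1} + ... + a_{2n}) under y ↦ x^2, and B is free of rank 2 over A' with basis 1, x, satisfying B ≅ A'[x]/(x^2 - y). -/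
open Polynomial

/-! Write `x` for the root of `f = g(X²)`, `g = Y^n + a₁ Y^(n-1) + ⋯ + aₙ`, and `S` for the
subalgebra generated by `y = x²`. Splitting products into their even and odd parts shows that
`B = S + x S`. Reducing modulo `g`, an element of `S` is a polynomial in `x` of degree `≤ 2n - 2`
with only even powers, so `x s = 0` forces `s = 0` because `f` is monic of degree `2n`. Since `τ`
fixes `S` and negates `x`, it acts as `p + x q ↦ p - x q`; as `2` is invertible, its fixed points
are exactly `S` and `1, x` are independent over `S`. -/

theorem exists_eq_add_mul_of_mem_adjoin {A B : Type*} [CommSemiring A] [CommSemiring B]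
    [Algebra A B] {x b : B} (hb : b ∈ Algebra.adjoin A {x}) :
    ∃ p ∈ Algebra.adjoin A {x ^ 2}, ∃ q ∈ Algebra.adjoin A {x ^ 2}, b = p + x * q := by
  set S := Algebra.adjoin A {x ^ 2}
  induction hb using Algebra.adjoin_induction with
  | mem y hy =>
    obtain rfl := Set.mem_singleton_iff.mp hy
    exact ⟨0, zero_mem S, 1, one_mem S, by ring⟩
  | algebraMap r => exact ⟨algebraMap A B r, S.algebraMap_mem r, 0, zero_mem S, by ring⟩
  | add y z _ _ ihy ihz =>
    obtain ⟨p₁, hp₁, q₁, hq₁, rfl⟩ := ihy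
    obtain ⟨p₂, hp₂, q₂, hq₂, rfl⟩ := ihz
    exact ⟨p₁ + p₂, add_mem hp₁ hp₂, q₁ + q₂, add_mem hq₁ hq₂, by ring⟩
  | mul y z _ _ ihy ihz =>
    obtain ⟨p₁, hp₁, q₁, hq₁, rfl⟩ := ihy
    obtain ⟨p₂, hp₂, q₂, hq₂, rfl⟩ := ihz
    have hx2 : x ^ 2 ∈ S := Algebra.subset_adjoin rfl
    exact ⟨p₁ * p₂ + x ^ 2 * (q₁ * q₂), add_mem (mul_mem hp₁ hp₂) (mul_mem hx2 (mul_mem hq₁ hq₂)),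
      p₁ * q₂ + q₁ * p₂, add_mem (mul_mem hp₁ hq₂) (mul_mem hq₁ hp₂), by ring⟩

theorem span_one_self_eq_top {A B : Type*} [CommRing A] [CommRing B] [Algebra A B] {x : B}
    (hgen : Algebra.adjoin A {x} = ⊤) :
    Submodule.span (Algebra.adjoin A {x ^ 2}) (Set.range ![1, x]) = ⊤ := by
  refine eq_top_iff.mpr fun b _ => ?_
  obtain ⟨p, hp, q, hq, rfl⟩ := exists_eq_add_mul_of_mem_adjoin (hgen ▸ Algebra.mem_top : b ∈ _)
  rw [Submodule.mem_span_range_iff_exists_fun]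
  exact ⟨![⟨p, hp⟩, ⟨q, hq⟩], by simp [Subalgebra.smul_def, mul_comm]⟩

section Involution

variable {A B : Type*} [CommRing A] [CommRing B] [Algebra A B] {x : B} {τ : B →ₐ[A] B}

theorem adjoin_sq_le_equalizer (hτ : τ x = -x) :
    Algebra.adjoin A {x ^ 2} ≤ AlgHom.equalizer τ (AlgHom.id A B) :=
  Algebra.adjoin_le <| Set.singleton_subset_iff.mpr <| by simp [hτ]

theorem map_eq_self_of_mem_adjoin_sq (hτ : τ x = -x) {s : B}
    (hs : s ∈ Algebra.adjoin A {x ^ 2}) : τ s = s :=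
  adjoin_sq_le_equalizer hτ hs

theorem equalizer_eq_adjoin_sq (hτ : τ x = -x) (h2 : IsUnit (2 : B))
    (hx : ∀ q ∈ Algebra.adjoin A {x ^ 2}, x * q = 0 → q = 0) (hgen : Algebra.adjoin A {x} = ⊤) :
    AlgHom.equalizer τ (AlgHom.id A B) = Algebra.adjoin A {x ^ 2} := by
  refine le_antisymm (fun b hb => ?_) (adjoin_sq_le_equalizer hτ)
  obtain ⟨p, hp, q, hq, rfl⟩ := exists_eq_add_mul_of_mem_adjoin (hgen ▸ Algebra.mem_top : b ∈ _)
  have hfix : τ (p + x * q) = p + x * q := hb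
  rw [map_add, map_mul, map_eq_self_of_mem_adjoin_sq hτ hp, map_eq_self_of_mem_adjoin_sq hτ hq,
    hτ] at hfix
  have h2q : x * (2 * q) = 0 := by linear_combination -hfix
  have hq0 : q = 0 := h2.mul_right_eq_zero.mp <| hx _ (mul_mem (ofNat_mem _ 2) hq) h2q
  simpa [hq0] using hp

theorem eq_zero_of_add_mul_eq_zero (hτ : τ x = -x) (h2 : IsUnit (2 : B))
    (hx : ∀ q ∈ Algebra.adjoin A {x ^ 2}, x * q = 0 → q = 0) {p q : B}
    (hp : p ∈ Algebra.adjoin A {x ^ 2}) (hq : q ∈ Algebra.adjoin A {x ^ 2}) (h : p + x * q = 0) :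
    p = 0 ∧ q = 0 := by
  have hτh : p - x * q = 0 := by
    have := congrArg τ h
    rw [map_add, map_mul, map_eq_self_of_mem_adjoin_sq hτ hp, map_eq_self_of_mem_adjoin_sq hτ hq,
      hτ, map_zero] at this
    linear_combination this
  have hp0 : p = 0 := h2.mul_right_eq_zero.mp (by linear_combination h + hτh)
  exact ⟨hp0, hx q hq (by linear_combination h - hp0)⟩

theorem linearIndependent_one_self (hτ : τ x = -x) (h2 : IsUnit (2 : B))
    (hx : ∀ q ∈ Algebra.adjoin A {x ^ 2}, x * q = 0 → q = 0) :
    LinearIndependent (Algebra.adjoin A {x ^ 2}) ![1, x] := by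
  rw [LinearIndependent.pair_iff]
  intro p q h
  have := eq_zero_of_add_mul_eq_zero hτ h2 hx p.2 q.2 <| by
    simpa [Subalgebra.smul_def, mul_comm] using h
  exact ⟨Subtype.ext this.1, Subtype.ext this.2⟩

end Involution

namespace AdjoinRoot

variable {A : Type*} [CommRing A] {g : A[X]}

theorem aeval_root_expand_two_sq (g : A[X]) : aeval (root (expand A 2 g) ^ 2) g = 0 := by
  rw [← expand_aeval, aeval_eq, mk_self]

theorem eq_zero_of_root_expand_two_mul_eq_zero (hg : g.Monic) {q : AdjoinRoot (expand A 2 g)}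
    (hq : q ∈ Algebra.adjoin A {root (expand A 2 g) ^ 2}) (h : root (expand A 2 g) * q = 0) :
    q = 0 := by
  rw [Algebra.adjoin_singleton_eq_range_aeval, AlgHom.mem_range] at hq
  obtain ⟨r, rfl⟩ := hq
  rw [← aeval_modByMonic_eq_self_of_root (aeval_root_expand_two_sq g)] at h ⊢
  set r' := r %ₘ g
  rw [← expand_aeval, aeval_eq] at h ⊢
  rw [← mk_X, ← map_mul, mk_eq_zero] at h
  by_contra hne
  have hr' : expand A 2 r' ≠ 0 := by rintro hr; simp [hr] at hne
  have : Nontrivial A := nontrivial_iff.mp (nontrivial_of_ne _ 0 hr')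
  have hdeg : r'.natDegree < g.natDegree :=
    natDegree_lt_natDegree (fun h0 => hr' (by simp [h0])) (degree_modByMonic_lt r hg)
  refine (hg.expand two_pos).not_dvd_of_natDegree_lt ?_ ?_ h
  · exact fun h0 => hr' (isRegular_X.left (h0.trans (mul_zero X).symm))
  · rw [natDegree_X_mul hr', natDegree_expand, natDegree_expand]
    omega

end AdjoinRoot

theorem monic_X_pow_add_sum_C_mul_X_pow_sub {A : Type*} [Semiring A] {n : ℕ} (a : Fin n → A) :
    (X ^ n + ∑ j : Fin n, C (a j) * X ^ (n - ((j : ℕ) + 1))).Monic := by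
  refine monic_X_pow_add ?_
  rw [← Equiv.sum_comp Fin.revPerm]
  convert degree_sum_fin_lt (fun i => a (Fin.rev i)) using 5 with i
  · rfl
  · rw [Fin.revPerm_apply, Fin.val_rev]
    omega

theorem expand_two_X_pow_add_sum {A : Type*} [CommSemiring A] {n : ℕ} (a : Fin n → A) :
    expand A 2 (X ^ n + ∑ j : Fin n, C (a j) * X ^ (n - ((j : ℕ) + 1))) =
      X ^ (2 * n) + ∑ j : Fin n, C (a j) * X ^ (2 * n - 2 * ((j : ℕ) + 1)) := by
  simp only [map_add, map_sum, map_mul, map_pow, expand_C, expand_X, ← pow_mul, Nat.mul_sub]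

theorem fixed_subalgebra_and_rank_two_general {A : Type*} [CommRing A] (h2 : IsUnit (2 : A))
    {n : ℕ} (a : Fin n → A) (f : A[X])
    (hf : f = X ^ (2 * n) + ∑ j : Fin n, C (a j) * X ^ (2 * n - 2 * ((j : ℕ) + 1)))
    (τ : AdjoinRoot f →ₐ[A] AdjoinRoot f)
    (hτ : τ (AdjoinRoot.root f) = -AdjoinRoot.root f) :
    AlgHom.equalizer τ (AlgHom.id A (AdjoinRoot f)) =
        Algebra.adjoin A {AdjoinRoot.root f ^ 2} ∧
      ((AdjoinRoot.root f ^ 2) ^ n +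
          ∑ j : Fin n, algebraMap A (AdjoinRoot f) (a j) *
            (AdjoinRoot.root f ^ 2) ^ (n - ((j : ℕ) + 1)) = 0) ∧
      ∃ b : Module.Basis (Fin 2) (Algebra.adjoin A {AdjoinRoot.root f ^ 2}) (AdjoinRoot f),
        b 0 = 1 ∧ b 1 = AdjoinRoot.root f := by
  set g : A[X] := X ^ n + ∑ j : Fin n, C (a j) * X ^ (n - ((j : ℕ) + 1))
  rw [← expand_two_X_pow_add_sum] at hf
  subst hf
  have h2B : IsUnit (2 : AdjoinRoot (expand A 2 g)) := by
    simpa only [map_ofNat] using h2.map (algebraMap A _)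
  have hx : ∀ q ∈ Algebra.adjoin A {AdjoinRoot.root (expand A 2 g) ^ 2},
      AdjoinRoot.root (expand A 2 g) * q = 0 → q = 0 := fun _ hq h =>
    AdjoinRoot.eq_zero_of_root_expand_two_mul_eq_zero (monic_X_pow_add_sum_C_mul_X_pow_sub a) hq h
  refine ⟨equalizer_eq_adjoin_sq hτ h2B hx AdjoinRoot.adjoinRoot_eq_top, ?_, ?_⟩
  · simpa [g] using AdjoinRoot.aeval_root_expand_two_sq g
  · exact ⟨.mk (linearIndependent_one_self hτ h2B hx)
      (span_one_self_eq_top AdjoinRoot.adjoinRoot_eq_top).ge, by simp, by simp⟩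

/-- Let `2` be invertible in `A`, `B = A[x]/(f)` with `f = x^{2n} + a_2 x^{2n-2} + ...
+ a_{2n}` even monic, and `τ` the involution with `τ(x) = -x`. Then the subalgebra
`A' = B^τ` of `τ`-fixed elements equals the image of `A[y]/(y^n + a_2 y^{n-1} + ... +
a_{2n})` under `y ↦ x²` (i.e. the subalgebra generated by `x²`, whose generator `y = x²`
satisfies that polynomial), and `B` is free of rank 2 over `A'` with basis `1, x`
(so `B ≅ A'[x]/(x² - y)`). -/
theorem fixed_subalgebra_and_rank_two {A : Type*} [CommRing A] (h2 : IsUnit (2 : A))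
    {n : ℕ} (hn : 1 ≤ n) (a : Fin n → A) (f : A[X])
    (hf : f = X ^ (2 * n) + ∑ j : Fin n, C (a j) * X ^ (2 * n - 2 * ((j : ℕ) + 1)))
    (τ : AdjoinRoot f →ₐ[A] AdjoinRoot f)
    (hτ : τ (AdjoinRoot.root f) = -AdjoinRoot.root f)
    (hττ : τ.comp τ = AlgHom.id A (AdjoinRoot f)) :
    AlgHom.equalizer τ (AlgHom.id A (AdjoinRoot f)) =
        Algebra.adjoin A {AdjoinRoot.root f ^ 2} ∧
      ((AdjoinRoot.root f ^ 2) ^ n +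
          ∑ j : Fin n, algebraMap A (AdjoinRoot f) (a j) *
            (AdjoinRoot.root f ^ 2) ^ (n - ((j : ℕ) + 1)) = 0) ∧
      ∃ b : Module.Basis (Fin 2) (Algebra.adjoin A {AdjoinRoot.root f ^ 2}) (AdjoinRoot f),
        b 0 = 1 ∧ b 1 = AdjoinRoot.root f :=
  fixed_subalgebra_and_rank_two_general h2 a f hf τ hτ
end

section
/- Let A = k[e,q] and B' = A[x]/(f_0) with f_0 = x^6 - e x^4 + (e²/4)x² + q, over a field k of characteristic ≠ 2. Then the elements y = x² and z = x(x² - e/2) of B' satisfy y³ - e y² + (e²/4) y + q = 0 and z² + q = 0 respectively, and B' is free of rank 3 over the subalgebra A[z]/(z²+q) with basis 1, x, x², and free of rank 2 over the subalgebra A[y]/(y³ - ey² + (e²/4)y + q) with basis 1, x. -/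
/-!
Both `y = x²` and `z = x (x² - e/2)` have the form `w = g(x)` with `g` monic of degree `n` and
`h ∘ g = f₀` for a monic `h` of degree `m`, where `(n, m) = (2, 3)`, resp. `(3, 2)`. Over `A[w]` the
root `x` satisfies the monic equation `g(X) - w = 0` of degree `n`, and `A[w]` is spanned over `A`
by `1, w, …, w^(m-1)`; so the `mn = 6` products `w^i x^j` span `B'` over `A`. Since `B'` is free of
rank `6` over the commutative ring `A`, a spanning family of that size is a basis, and its
independence over `A` yields the independence of `1, x, …, x^(n-1)` over `A[w]`.
-/

open Polynomial Module Submodule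

theorem Polynomial.aeval_mem_span_pow_of_monic {R S : Type*} [CommRing R] [Ring S] [Algebra R S]
    {x : S} {p : R[X]} (hp : p.Monic) (hx : aeval x p = 0) {d : ℕ} (hd : p.natDegree ≤ d)
    (f : R[X]) : aeval x f ∈ span R (Set.range fun i : Fin d => x ^ (i : ℕ)) := by
  nontriviality S
  have := (algebraMap R S).domain_nontrivial
  refine PowerBasis.mem_span_pow'.mpr ⟨f %ₘ p, ?_, ?_⟩
  · exact (degree_modByMonic_lt f hp).trans_le (degree_le_natDegree.trans (by exact_mod_cast hd))
  · conv_lhs => rw [← modByMonic_add_div f p]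
    simp [hx]

theorem LinearIndependent.of_smul_of_span_eq_top {ι κ R S M : Type*} [Fintype ι] [Fintype κ]
    [CommRing R] [Ring S] [AddCommGroup M] [Algebra R S] [Module S M] [Module R M]
    [IsScalarTower R S M] {b : ι → S} {c : κ → M} (hb : span R (Set.range b) = ⊤)
    (hbc : LinearIndependent R fun p : ι × κ => b p.1 • c p.2) : LinearIndependent S c := by
  rw [Fintype.linearIndependent_iff] at hbc ⊢
  intro a ha j
  choose r hr using fun j => (mem_span_range_iff_exists_fun R).mp (hb ▸ mem_top : a j ∈ _)
  have hr0 : ∀ i j, r j i = 0 := fun i j => by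
    refine hbc (fun p => r p.2 p.1) ?_ (i, j)
    simp_rw [Fintype.sum_prod_type_right, ← smul_assoc, ← Finset.sum_smul, hr, ha]
  simp [← hr j, hr0]

section AdjoinAeval

variable {R B : Type*} [CommRing R] [CommRing B] [Algebra R B]

theorem Algebra.span_pow_adjoin_singleton_eq_top {w : B} {h : R[X]} (hh : h.Monic)
    (hw : aeval w h = 0) :
    span R (Set.range fun i : Fin h.natDegree =>
      (⟨w, Algebra.self_mem_adjoin_singleton R w⟩ : Algebra.adjoin R {w}) ^ (i : ℕ)) = ⊤ := by
  refine _root_.eq_top_iff.mpr ?_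
  rintro ⟨a, ha⟩ -
  rw [Algebra.adjoin_singleton_eq_range_aeval] at ha
  obtain ⟨f, rfl⟩ := (AlgHom.mem_range _).mp ha
  convert aeval_mem_span_pow_of_monic hh ?_ le_rfl f
  · exact (aeval_subalgebra_coe f _ ⟨w, Algebra.self_mem_adjoin_singleton R w⟩).symm
  · exact Subtype.ext (by simpa [aeval_subalgebra_coe] using hw)

theorem span_pow_eq_top_over_adjoin_aeval {x : B} (hx : Algebra.adjoin R {x} = ⊤) {g : R[X]}
    (hg : g.Monic) (hg0 : 0 < g.natDegree) :
    span (Algebra.adjoin R {aeval x g}) (Set.range fun j : Fin g.natDegree => x ^ (j : ℕ)) = ⊤ := by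
  set A := Algebra.adjoin R {aeval x g}
  set w : A := ⟨aeval x g, Algebra.self_mem_adjoin_singleton R _⟩
  have hq : (g.map (algebraMap R A) - C w).Monic := by
    rcases subsingleton_or_nontrivial A with hA | hA
    · exact monic_of_subsingleton _
    refine (hg.map _).sub_of_left (degree_C_le.trans_lt ?_)
    rw [hg.degree_map, degree_eq_natDegree (ne_zero_of_natDegree_gt hg0)]
    exact_mod_cast hg0
  have hqx : aeval x (g.map (algebraMap R A) - C w) = 0 := by
    simp [aeval_map_algebraMap, w]
  have hqd : (g.map (algebraMap R A) - C w).natDegree ≤ g.natDegree :=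
    (natDegree_sub_C).le.trans natDegree_map_le
  refine eq_top_iff.mpr ?_
  rintro b -
  obtain ⟨f, rfl⟩ := (AlgHom.mem_range _).mp
    (Algebra.adjoin_singleton_eq_range_aeval R x ▸ hx ▸ Algebra.mem_top (x := b))
  rw [← aeval_map_algebraMap A]
  exact aeval_mem_span_pow_of_monic hq hqx hqd _

end AdjoinAeval

theorem exists_basis_pow_over_adjoin_aeval {R B : Type*} [CommRing R] [CommRing B] [Algebra R B]
    {x : B} (hx : Algebra.adjoin R {x} = ⊤) {g h : R[X]} (hg : g.Monic) (hg0 : 0 < g.natDegree)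
    (hh : h.Monic) (hgh : aeval (aeval x g) h = 0)
    (hrank : finrank R B = h.natDegree * g.natDegree) :
    ∃ b : Basis (Fin g.natDegree) (Algebra.adjoin R {aeval x g}) B, ∀ j, b j = x ^ (j : ℕ) := by
  have hA := Algebra.span_pow_adjoin_singleton_eq_top hh hgh
  have hB := span_pow_eq_top_over_adjoin_aeval hx hg hg0
  have hspan := span_smul_of_span_eq_top hA (Set.range fun j : Fin g.natDegree => x ^ (j : ℕ))
  rw [hB, restrictScalars_top, Set.range_smul_range] at hspan
  have hli := linearIndependent_of_top_le_span_of_card_eq_finrank hspan.ge (by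
    rw [Fintype.card_prod, Fintype.card_fin, Fintype.card_fin, hrank])
  have hli' : LinearIndependent (Algebra.adjoin R {aeval x g})
      fun j : Fin g.natDegree => x ^ (j : ℕ) := hli.of_smul_of_span_eq_top hA
  exact ⟨Basis.mk hli' hB.ge, fun j => Basis.mk_apply _ _ j⟩

theorem AdjoinRoot.aeval_aeval_root_eq_zero_of_comp_eq {R : Type*} [CommRing R] {f g h : R[X]}
    (hhg : h.comp g = f) : aeval (aeval (root f) g) h = 0 := by
  rw [← aeval_comp, hhg, aeval_eq, mk_self]

theorem AdjoinRoot.exists_basis_root_pow_over_adjoin_aeval {R : Type*} [CommRing R]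
    {f g h : R[X]} {n : ℕ} (hg : g.Monic) (hgn : g.natDegree = n) (hn : 0 < n) (hh : h.Monic)
    (hhg : h.comp g = f) :
    ∃ b : Basis (Fin n) (Algebra.adjoin R {aeval (root f) g}) (AdjoinRoot f),
      ∀ j, b j = root f ^ (j : ℕ) := by
  subst hgn
  have : Nontrivial R := Polynomial.nontrivial_iff.mp ⟨g, 0, ne_zero_of_natDegree_gt hn⟩
  refine exists_basis_pow_over_adjoin_aeval adjoinRoot_eq_top hg hn hh
    (aeval_aeval_root_eq_zero_of_comp_eq hhg) ?_
  subst hhg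
  rw [(powerBasis' (hh.comp hg hn.ne')).finrank, powerBasis'_dim,
    natDegree_comp_eq_of_mul_ne_zero (by simp [hh.leadingCoeff, hg.leadingCoeff])]

theorem comp_X_sq_eq_sextic {R : Type*} [CommRing R] (e c q : R) :
    (X ^ 3 - C e * X ^ 2 + C c * X + C q).comp (X ^ 2 : R[X]) =
      X ^ 6 - C e * X ^ 4 + C c * X ^ 2 + C q := by
  simp only [sub_comp, add_comp, mul_comp, pow_comp, C_comp, X_comp]
  ring

theorem comp_X_mul_X_sq_sub_C_eq_sextic {R : Type*} [CommRing R] {e c d q : R} (hd : 2 * d = e)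
    (hc : d ^ 2 = c) :
    (X ^ 2 + C q).comp (X * (X ^ 2 - C d) : R[X]) = X ^ 6 - C e * X ^ 4 + C c * X ^ 2 + C q := by
  simp only [add_comp, pow_comp, C_comp, X_comp]
  rw [← hd, ← hc]
  simp only [map_mul, map_pow, map_ofNat]
  ring

/-- Over `A = k[e,q]` (with `e = X 0`, `q = X 1` and `char k ≠ 2`), in
`B' = A[x]/(f₀)` with `f₀ = x⁶ - e x⁴ + (e²/4) x² + q`, the elements `y = x²` and
`z = x(x² - e/2)` satisfy `y³ - e y² + (e²/4) y + q = 0` and `z² + q = 0`, and `B'` is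
free of rank 3 over the subalgebra generated by `z` with basis `1, x, x²`, and free of
rank 2 over the subalgebra generated by `y` with basis `1, x`. -/
theorem g2_spectral_subcovers {k : Type*} [Field k] (h2 : (2 : k) ≠ 0)
    (f₀ : Polynomial (MvPolynomial (Fin 2) k))
    (hf₀ : f₀ = X ^ 6 - C (MvPolynomial.X 0) * X ^ 4 +
        C (MvPolynomial.X 0 ^ 2 * MvPolynomial.C ((4 : k)⁻¹)) * X ^ 2 +
        C (MvPolynomial.X 1)) :
    ((AdjoinRoot.root f₀ ^ 2) ^ 3 -
        algebraMap (MvPolynomial (Fin 2) k) (AdjoinRoot f₀) (MvPolynomial.X 0) *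
          (AdjoinRoot.root f₀ ^ 2) ^ 2 +
        algebraMap (MvPolynomial (Fin 2) k) (AdjoinRoot f₀)
            (MvPolynomial.X 0 ^ 2 * MvPolynomial.C ((4 : k)⁻¹)) *
          (AdjoinRoot.root f₀ ^ 2) +
        algebraMap (MvPolynomial (Fin 2) k) (AdjoinRoot f₀) (MvPolynomial.X 1) = 0) ∧
      ((AdjoinRoot.root f₀ * (AdjoinRoot.root f₀ ^ 2 -
            algebraMap (MvPolynomial (Fin 2) k) (AdjoinRoot f₀)
              (MvPolynomial.X 0 * MvPolynomial.C ((2 : k)⁻¹)))) ^ 2 +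
          algebraMap (MvPolynomial (Fin 2) k) (AdjoinRoot f₀) (MvPolynomial.X 1) = 0) ∧
      (∃ b : Module.Basis (Fin 3)
          (Algebra.adjoin (MvPolynomial (Fin 2) k)
            {AdjoinRoot.root f₀ * (AdjoinRoot.root f₀ ^ 2 -
              algebraMap (MvPolynomial (Fin 2) k) (AdjoinRoot f₀)
                (MvPolynomial.X 0 * MvPolynomial.C ((2 : k)⁻¹)))})
          (AdjoinRoot f₀),
        b 0 = 1 ∧ b 1 = AdjoinRoot.root f₀ ∧ b 2 = AdjoinRoot.root f₀ ^ 2) ∧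
      (∃ b : Module.Basis (Fin 2)
          (Algebra.adjoin (MvPolynomial (Fin 2) k) {AdjoinRoot.root f₀ ^ 2})
          (AdjoinRoot f₀),
        b 0 = 1 ∧ b 1 = AdjoinRoot.root f₀) := by
  set d : MvPolynomial (Fin 2) k := MvPolynomial.X 0 * MvPolynomial.C 2⁻¹
  set x := AdjoinRoot.root f₀
  have hd : 2 * d = MvPolynomial.X 0 := by
    rw [mul_left_comm, ← map_ofNat MvPolynomial.C 2, ← map_mul, mul_inv_cancel₀ h2, map_one,
      mul_one]
  have hd_sq : d ^ 2 = MvPolynomial.X 0 ^ 2 * MvPolynomial.C (4⁻¹ : k) := by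
    rw [mul_pow, ← map_pow]
    norm_num
  have hy := (comp_X_sq_eq_sextic _ _ _).trans hf₀.symm
  have hz := (comp_X_mul_X_sq_sub_C_eq_sextic hd hd_sq).trans hf₀.symm
  have hgz : aeval x (X * (X ^ 2 - C d)) = x * (x ^ 2 - algebraMap _ _ d) := by simp
  have hgy : aeval x (X ^ 2 : (MvPolynomial (Fin 2) k)[X]) = x ^ 2 := by simp
  have hbasis_z := AdjoinRoot.exists_basis_root_pow_over_adjoin_aeval (n := 3) (by monicity!)
    (by compute_degree!) (by norm_num) (by monicity!) hz
  have hbasis_y := AdjoinRoot.exists_basis_root_pow_over_adjoin_aeval (n := 2) (by monicity!)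
    (by compute_degree!) (by norm_num) (by monicity!) hy
  rw [hgz] at hbasis_z
  rw [hgy] at hbasis_y
  obtain ⟨b₃, hb₃⟩ := hbasis_z
  obtain ⟨b₂, hb₂⟩ := hbasis_y
  exact ⟨by simpa [hgy] using AdjoinRoot.aeval_aeval_root_eq_zero_of_comp_eq hy,
    by simpa [hgz] using AdjoinRoot.aeval_aeval_root_eq_zero_of_comp_eq hz,
    ⟨b₃, by simpa using hb₃ 0, by simpa using hb₃ 1, hb₃ 2⟩,
    ⟨b₂, by simpa using hb₂ 0, by simpa using hb₂ 1⟩⟩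
end

section
/- Let k be a field, A a k-algebra, A' a finite flat A-algebra, and B a finite flat A'-algebra of degree d, with B ≅ A'[x]/(P_2) for a monic polynomial P_2 of degree d. Then for each b ∈ B there is a surjective A-algebra homomorphism from the d-fold tensor power ⊗_{A'}^d B to A' ⊗_S R (where S = k[α_1,...,α_d] maps to A' via the coefficients of P_2 and R = k[x_1,...,x_d] is the polynomial algebra with its S-module structure via elementary symmetric polynomials), given on the i-th tensor factor by x ↦ x_i, and this homomorphism is equivariant for the S_d-actions permuting tensor factors and variables respectively. -/
/-!
In `A' ⊗_S R = A'[x_1, …, x_d] ⧸ ((-1)^i e_i(x) - a'_i)` the coefficients of `P₂` become the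
signed elementary symmetric polynomials of the `x_j`, so by Vieta, `P₂ = ∏ j, (X - x_j)` there
and every `x_i` is a root of `P₂`. Hence the `i`-th factor `A'[x]/(P₂)` maps to `A' ⊗_S R` by
`x ↦ x_i`, and the product of these maps is an algebra map out of the tensor power. Its image
contains the generators `x_i`, and renaming the variables by a permutation permutes the factor
maps.
-/

open Polynomial

open scoped TensorProduct

namespace PiTensorProduct

variable {ι R S : Type*} [Fintype ι] [CommSemiring R] {A : ι → Type*}
  [∀ i, CommSemiring (A i)] [∀ i, Algebra R (A i)] [CommSemiring S] [Algebra R S]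

noncomputable def prodAlgHom (f : ∀ i, A i →ₐ[R] S) : (⨂[R] i, A i) →ₐ[R] S :=
  liftAlgHom ((MultilinearMap.mkPiAlgebra R ι S).compLinearMap fun i => (f i).toLinearMap)
    (by simp) fun x y => by simp [Finset.prod_mul_distrib]

@[simp]
theorem prodAlgHom_tprod (f : ∀ i, A i →ₐ[R] S) (v : ∀ i, A i) :
    prodAlgHom f (tprod R v) = ∏ i, f i (v i) :=
  (liftAlgHom_apply _ _ _ _).trans (by simp)

theorem prodAlgHom_tprod_mulSingle [DecidableEq ι] (f : ∀ i, A i →ₐ[R] S) (i : ι)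
    (x : A i) :
    prodAlgHom f (tprod R (Pi.mulSingle i x)) = f i x := by
  rw [prodAlgHom_tprod, Finset.prod_eq_single i (fun j _ hj => by simp [hj]) (by simp)]
  simp

theorem prodAlgHom_tprod_perm {B : Type*} [CommSemiring B] [Algebra R B]
    (f : ι → B →ₐ[R] S) (σ : Equiv.Perm ι) (ψ : S →ₐ[R] S)
    (hψ : ∀ i, ψ.comp (f i) = f (σ⁻¹ i)) (v : ι → B) :
    prodAlgHom f (tprod R fun i => v (σ i)) = ψ (prodAlgHom f (tprod R v)) := by
  simp only [prodAlgHom_tprod, map_prod, ← AlgHom.comp_apply, hψ]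
  exact (Equiv.prod_comp σ⁻¹ _).symm.trans (by simp)

end PiTensorProduct

namespace MvPolynomial

theorem surjective_of_apply_eq_mk_X {σ R S : Type*} [CommRing R] [CommRing S]
    [Algebra R S] {I : Ideal (MvPolynomial σ R)} (f : S →ₐ[R] MvPolynomial σ R ⧸ I)
    (s : σ → S) (hs : ∀ i, f (s i) = Ideal.Quotient.mk I (X i)) : Function.Surjective f := by
  have hcomp : f.comp (aeval (R := R) s) = Ideal.Quotient.mkₐ R I :=
    algHom_ext fun i => by simp [hs]
  refine Function.Surjective.of_comp (g := aeval (R := R) s) ?_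
  rw [← AlgHom.coe_comp, hcomp]
  exact Ideal.Quotient.mkₐ_surjective R I

variable {R : Type*} [CommRing R] {d : ℕ}

theorem sum_range_signed_esymm_mul_X_pow_eq_zero {σ : Type*} [Fintype σ] (i : σ) :
    ∑ j ∈ Finset.range (Fintype.card σ + 1),
      (-1) ^ j * (esymm σ R j * X i ^ (Fintype.card σ - j)) = 0 := by
  set s := Finset.univ.val.map fun j : σ => (X j : MvPolynomial σ R)
  have hvieta := congrArg (Polynomial.eval (X i : MvPolynomial σ R))
    (Multiset.prod_X_sub_X_eq_sum_esymm s)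
  have hcard : Multiset.card s = Fintype.card σ := by simp [s]
  have hzero : (0 : MvPolynomial σ R) ∈
      (s.map fun t => Polynomial.X - Polynomial.C t).map (Polynomial.eval (X i)) := by
    rw [Multiset.map_map]
    exact Multiset.mem_map.mpr ⟨_, Multiset.mem_map_of_mem _ (Finset.mem_univ i), by simp⟩
  rw [eval_multiset_prod, Multiset.prod_eq_zero hzero, eval_finsetSum, hcard] at hvieta
  simp only [Polynomial.eval_mul, Polynomial.eval_pow, Polynomial.eval_neg, Polynomial.eval_one,
    Polynomial.eval_C, Polynomial.eval_X] at hvieta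
  rwa [esymm_eq_multiset_esymm, eq_comm]

theorem X_pow_add_sum_signed_esymm_mul_X_pow_eq_zero (i : Fin d) :
    X i ^ d + ∑ j : Fin d, (-1) ^ ((j : ℕ) + 1) * esymm (Fin d) R ((j : ℕ) + 1) *
      X i ^ (d - 1 - (j : ℕ)) = 0 := by
  have hvieta := sum_range_signed_esymm_mul_X_pow_eq_zero (R := R) i
  rw [Fintype.card_fin] at hvieta
  rw [← hvieta, Finset.sum_range_succ',
    Fin.sum_univ_eq_sum_range (fun j => (-1) ^ (j + 1) * esymm (Fin d) R (j + 1) *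
      X i ^ (d - 1 - j)), add_comm]
  simp only [esymm_zero, pow_zero, one_mul, Nat.sub_zero, Nat.sub_sub, add_comm 1, mul_assoc]

/-- `MvPolynomial (Fin d) R ⧸ signedEsymmIdeal a` is `R ⊗_S k[x_1, …, x_d]`, where
`S = k[α_1, …, α_d]` maps to `R` by `α_i ↦ a i` and to `k[x_1, …, x_d]` by
`α_i ↦ (-1)^i e_i(x)`. -/
noncomputable def signedEsymmIdeal (a : Fin d → R) : Ideal (MvPolynomial (Fin d) R) :=
  Ideal.span (Set.range fun i : Fin d =>
    (-1 : MvPolynomial (Fin d) R) ^ ((i : ℕ) + 1) * esymm (Fin d) R ((i : ℕ) + 1) - C (a i))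

variable (a : Fin d → R)

theorem mk_C_eq_mk_signed_esymm (j : Fin d) :
    Ideal.Quotient.mk (signedEsymmIdeal a) (C (a j)) =
      Ideal.Quotient.mk (signedEsymmIdeal a)
        ((-1 : MvPolynomial (Fin d) R) ^ ((j : ℕ) + 1) * esymm (Fin d) R ((j : ℕ) + 1)) := by
  rw [eq_comm, Ideal.Quotient.eq]
  exact Ideal.subset_span ⟨j, rfl⟩

theorem aeval_mk_X_eq_zero (i : Fin d) :
    Polynomial.aeval (Ideal.Quotient.mk (signedEsymmIdeal a) (X i))
      (Polynomial.X ^ d + ∑ j : Fin d, Polynomial.C (a j) * Polynomial.X ^ (d - 1 - (j : ℕ))) =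
      0 := by
  simp only [map_add, map_pow, map_sum, map_mul, Polynomial.aeval_X, Polynomial.aeval_C,
    ← Ideal.Quotient.mk_algebraMap, algebraMap_eq, mk_C_eq_mk_signed_esymm]
  simp only [← map_pow, ← map_mul, ← map_sum, ← map_add,
    X_pow_add_sum_signed_esymm_mul_X_pow_eq_zero, map_zero]

theorem signedEsymmIdeal_le_comap_rename (σ : Equiv.Perm (Fin d)) :
    signedEsymmIdeal a ≤ (signedEsymmIdeal a).comap (rename σ) := by
  refine Ideal.span_le.mpr ?_
  rintro _ ⟨j, rfl⟩
  simp only [SetLike.mem_coe, Ideal.mem_comap, map_sub, map_mul, map_pow, map_neg, map_one,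
    rename_C, rename_esymm]
  exact Ideal.subset_span ⟨j, rfl⟩

noncomputable def rootAlgHom (i : Fin d) :
    AdjoinRoot
        (Polynomial.X ^ d + ∑ j : Fin d, Polynomial.C (a j) * Polynomial.X ^ (d - 1 - (j : ℕ)))
      →ₐ[R] MvPolynomial (Fin d) R ⧸ signedEsymmIdeal a :=
  AdjoinRoot.liftAlgHom _ (Algebra.ofId _ _) _ (aeval_mk_X_eq_zero a i)

theorem rootAlgHom_root (i : Fin d) :
    rootAlgHom a i (AdjoinRoot.root _) = Ideal.Quotient.mk (signedEsymmIdeal a) (X i) :=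
  AdjoinRoot.liftAlgHom_root ..

theorem quotientMapₐ_rename_comp_rootAlgHom (τ : Equiv.Perm (Fin d)) (i : Fin d) :
    (Ideal.quotientMapₐ _ (rename τ) (signedEsymmIdeal_le_comap_rename a τ)).comp
      (rootAlgHom a i) = rootAlgHom a (τ i) := by
  refine AdjoinRoot.algHom_ext ?_
  rw [AlgHom.comp_apply, rootAlgHom_root, rootAlgHom_root]
  simp

end MvPolynomial

theorem tensor_power_to_special_component_general {A' : Type*}
    [CommRing A']
    {d : ℕ} (a' : Fin d → A') (P₂ : Polynomial A')
    (hP₂ : P₂ = X ^ d + ∑ i : Fin d, C (a' i) * X ^ (d - 1 - (i : ℕ))) :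
    ∃ Φ : PiTensorProduct A' (fun _ : Fin d => AdjoinRoot P₂) →ₐ[A']
        (MvPolynomial (Fin d) A' ⧸ Ideal.span (Set.range fun i : Fin d =>
          (-1 : MvPolynomial (Fin d) A') ^ ((i : ℕ) + 1) *
              MvPolynomial.esymm (Fin d) A' ((i : ℕ) + 1) - MvPolynomial.C (a' i))),
      Function.Surjective Φ ∧
      (∀ i : Fin d,
        Φ (PiTensorProduct.tprod A'
            (fun j => if j = i then AdjoinRoot.root P₂ else 1)) =
          Ideal.Quotient.mk _ (MvPolynomial.X i)) ∧
      (∀ (σ : Equiv.Perm (Fin d)) (v : Fin d → AdjoinRoot P₂)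
          (p : MvPolynomial (Fin d) A'),
        Φ (PiTensorProduct.tprod A' v) = Ideal.Quotient.mk _ p →
        Φ (PiTensorProduct.tprod A' (fun i => v (σ i))) =
          Ideal.Quotient.mk _ (MvPolynomial.rename ⇑σ⁻¹ p)) := by
  subst hP₂
  have hsingle (i : Fin d) : PiTensorProduct.prodAlgHom (MvPolynomial.rootAlgHom a')
      (PiTensorProduct.tprod A' (Pi.mulSingle i (AdjoinRoot.root _))) =
        Ideal.Quotient.mk _ (MvPolynomial.X i) := by
    rw [PiTensorProduct.prodAlgHom_tprod_mulSingle, MvPolynomial.rootAlgHom_root]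
  refine ⟨PiTensorProduct.prodAlgHom (MvPolynomial.rootAlgHom a'),
    MvPolynomial.surjective_of_apply_eq_mk_X _ _ hsingle, fun i => ?_, fun σ v p hp => ?_⟩
  · refine Eq.trans ?_ (hsingle i)
    exact congrArg _ (congrArg _ (funext fun j => (Pi.mulSingle_apply i _ j).symm))
  · exact (PiTensorProduct.prodAlgHom_tprod_perm _ σ _
      (MvPolynomial.quotientMapₐ_rename_comp_rootAlgHom a' σ⁻¹) v).trans (congrArg _ hp)

/-- For `B = A'[x]/(P₂)` with `P₂ = x^d + a'_1 x^{d-1} + ... + a'_d` monic of degree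
`d` over a finite flat `A`-algebra `A'` (over a `k`-algebra `A`), there is a surjective
`A'`-algebra (hence `A`-algebra) homomorphism from the `d`-fold tensor power
`⊗_{A'}^d B` to `A' ⊗_S R = A'[x_1,...,x_d]/((-1)^i e_i(x) - a'_i, i = 1..d)`, sending
the root `x` in the `i`-th tensor factor to `x_i`, equivariant for the `S_d`-actions
permuting tensor factors and variables respectively. -/
theorem tensor_power_to_special_component {k A A' : Type*} [Field k] [CommRing A]
    [CommRing A'] [Algebra k A] [Algebra A A'] [Algebra k A'] [IsScalarTower k A A']
    [Module.Finite A A'] [Module.Flat A A']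
    {d : ℕ} (hd : 0 < d) (a' : Fin d → A') (P₂ : Polynomial A')
    (hP₂ : P₂ = X ^ d + ∑ i : Fin d, C (a' i) * X ^ (d - 1 - (i : ℕ))) :
    ∃ Φ : PiTensorProduct A' (fun _ : Fin d => AdjoinRoot P₂) →ₐ[A']
        (MvPolynomial (Fin d) A' ⧸ Ideal.span (Set.range fun i : Fin d =>
          (-1 : MvPolynomial (Fin d) A') ^ ((i : ℕ) + 1) *
              MvPolynomial.esymm (Fin d) A' ((i : ℕ) + 1) - MvPolynomial.C (a' i))),
      Function.Surjective Φ ∧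
      (∀ i : Fin d,
        Φ (PiTensorProduct.tprod A'
            (fun j => if j = i then AdjoinRoot.root P₂ else 1)) =
          Ideal.Quotient.mk _ (MvPolynomial.X i)) ∧
      (∀ (σ : Equiv.Perm (Fin d)) (v : Fin d → AdjoinRoot P₂)
          (p : MvPolynomial (Fin d) A'),
        Φ (PiTensorProduct.tprod A' v) = Ideal.Quotient.mk _ p →
        Φ (PiTensorProduct.tprod A' (fun i => v (σ i))) =
          Ideal.Quotient.mk _ (MvPolynomial.rename ⇑σ⁻¹ p)) :=
  tensor_power_to_special_component_general a' P₂ hP₂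
end
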